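/- Fix n ≥ 1, x₀ ∈ ℝ^{k₀}, maps h_i : ℝ^{k_{i−1}} × ℝ^m → ℝ^{k_i}, f : ℝ^{k₁} × ⋯ × ℝ^{k_n} → ℝ, θ₀ ∈ ℝ^m and ε > 0, and define x_i(θ) = h_i(x_{i−1}(θ), θ) recursively. Assume there are constants N_i ≥ 0 (i = 1,…,n), K_i ≥ 0 (i = 2,…,n), M_i ≥ 0 (i = 1,…,n) such that for all θ₁, θ₂, θ̄ with ‖θ₁ − θ₀‖ ≤ ε, ‖θ₂ − θ₀‖ ≤ ε, ‖θ̄ − θ₀‖ ≤ ε: (a) ‖h_i(x_{i−1}(θ₀), θ₁) − h_i(x_{i−1}(θ₀), θ₂)‖ ≤ N_i ‖θ₁ − θ₂‖; (b) ‖h_i(x_{i−1}(θ₁), θ̄) − h_i(x_{i−1}(θ₂), θ̄)‖ ≤ K_i ‖x_{i−1}(θ₁) − x_{i−1}(θ₂)‖ for i ≥ 2; (c) |f(x₁(θ₁),…,x_i(θ₁), x_{i+1}(θ₂),…,x_n(θ₂)) − f(x₁(θ₁),…,x_{i−1}(θ₁), x_i(θ₂),…,x_n(θ₂))| ≤ M_i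 ‖x_i(θ₁) − x_i(θ₂)‖. Then for every θ* with ‖θ* − θ₀‖ ≤ ε, |f(x₁(θ*),…,x_n(θ*)) − f(x₁(θ₀),…,x_n(θ₀))| ≤ ‖θ* − θ₀‖ · Σ_{i=1}^n M_i Σ_{j=1}^i ∏_{k=1}^{i−j} K_{i−k+1} · N_j (empty products equal 1). -/
import Mathlib


open scoped BigOperators

noncomputable section

/-- **Lipschitz propagation through a recursively defined model (key inequality in the
proof of Theorem 2.2).**  States `x_i(θ)` satisfy `x_i = h_i(x_{i-1}, θ)`; indices are
shifted so `h i`, `N i`, `M i` are the paper's `h_{i+1}`, `N_{i+1}`, `M_{i+1}`, and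
`K i` is the paper's `K_{i+1}` (the paper's `K_i`, `i = 2,…,n` are `K j`, `j = 1,…,n-1`).
`mix i θ₁ θ₂` is the mixed tuple `(x₁(θ₁),…,x_i(θ₁), x_{i+1}(θ₂),…,x_n(θ₂))`.
Hypotheses (a), (b), (c) are the local Lipschitz bounds of the paper, holding for all
parameters within distance `ε` of `θ₀`.  Conclusion: the stated bound on
`|f(x₁(θ*),…,x_n(θ*)) − f(x₁(θ₀),…,x_n(θ₀))|` (note `mix n θs θ₀` is the tuple at `θs`
and `mix 0 θs θ₀` the tuple at `θ₀`), with empty products equal to `1`. -/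
theorem stmt_4
    (n m : ℕ) (hn : 1 ≤ n) (k : ℕ → ℕ)
    (x₀ : EuclideanSpace ℝ (Fin (k 0)))
    (h : (i : ℕ) → EuclideanSpace ℝ (Fin (k i)) × EuclideanSpace ℝ (Fin m) →
      EuclideanSpace ℝ (Fin (k (i + 1))))
    (f : ((j : Fin n) → EuclideanSpace ℝ (Fin (k (j.1 + 1)))) → ℝ)
    (θ₀ : EuclideanSpace ℝ (Fin m)) (ε : ℝ) (hε : 0 < ε)
    (x : (i : ℕ) → EuclideanSpace ℝ (Fin m) → EuclideanSpace ℝ (Fin (k i)))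
    (hx0 : ∀ θ, x 0 θ = x₀)
    (hxs : ∀ i θ, x (i + 1) θ = h i (x i θ, θ))
    (N K M : ℕ → ℝ)
    (hN : ∀ j, 0 ≤ N j) (hK : ∀ j, 0 ≤ K j) (hM : ∀ j, 0 ≤ M j)
    (mix : ℕ → EuclideanSpace ℝ (Fin m) → EuclideanSpace ℝ (Fin m) →
      ((j : Fin n) → EuclideanSpace ℝ (Fin (k (j.1 + 1)))))
    (hmix : ∀ i θ₁ θ₂ (j : Fin n),
      mix i θ₁ θ₂ j = if j.1 < i then x (j.1 + 1) θ₁ else x (j.1 + 1) θ₂)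
    (ha : ∀ j < n, ∀ θ₁ θ₂ : EuclideanSpace ℝ (Fin m),
      ‖θ₁ - θ₀‖ ≤ ε → ‖θ₂ - θ₀‖ ≤ ε →
      ‖h j (x j θ₀, θ₁) - h j (x j θ₀, θ₂)‖ ≤ N j * ‖θ₁ - θ₂‖)
    (hb : ∀ j, 1 ≤ j → j < n → ∀ θ₁ θ₂ θb : EuclideanSpace ℝ (Fin m),
      ‖θ₁ - θ₀‖ ≤ ε → ‖θ₂ - θ₀‖ ≤ ε → ‖θb - θ₀‖ ≤ ε →
      ‖h j (x j θ₁, θb) - h j (x j θ₂, θb)‖ ≤ K j * ‖x j θ₁ - x j θ₂‖)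
    (hc : ∀ j < n, ∀ θ₁ θ₂ : EuclideanSpace ℝ (Fin m),
      ‖θ₁ - θ₀‖ ≤ ε → ‖θ₂ - θ₀‖ ≤ ε →
      |f (mix (j + 1) θ₁ θ₂) - f (mix j θ₁ θ₂)| ≤ M j * ‖x (j + 1) θ₁ - x (j + 1) θ₂‖) :
    ∀ θs : EuclideanSpace ℝ (Fin m), ‖θs - θ₀‖ ≤ ε →
      |f (mix n θs θ₀) - f (mix 0 θs θ₀)| ≤
        ‖θs - θ₀‖ * ∑ i ∈ Finset.range n, M i *
          ∑ j ∈ Finset.range (i + 1),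
            (∏ t ∈ Finset.Ico (j + 1) (i + 1), K t) * N j := by
  intro θs hθs
  have hθ₀ : ‖θ₀ - θ₀‖ ≤ ε := by simp [le_of_lt hε]
  -- state bound by induction
  have key : ∀ i, i < n → ‖x (i + 1) θs - x (i + 1) θ₀‖ ≤
      ‖θs - θ₀‖ * ∑ j ∈ Finset.range (i + 1),
        (∏ t ∈ Finset.Ico (j + 1) (i + 1), K t) * N j := by
    intro i
    induction i with
    | zero =>
      intro hi
      rw [hxs 0 θs, hxs 0 θ₀, hx0 θs, hx0 θ₀]
      simpa [hx0, mul_comm] using ha 0 hi θs θ₀ hθs hθ₀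
    | succ i ih =>
      intro hi
      have hi' : i < n := Nat.lt_of_succ_lt hi
      have h1 : ‖x (i + 2) θs - x (i + 2) θ₀‖ ≤
          ‖h (i+1) (x (i+1) θs, θs) - h (i+1) (x (i+1) θ₀, θs)‖ +
          ‖h (i+1) (x (i+1) θ₀, θs) - h (i+1) (x (i+1) θ₀, θ₀)‖ := by
        rw [hxs (i+1) θs, hxs (i+1) θ₀]
        exact norm_sub_le_norm_sub_add_norm_sub _ _ _
      have h2 := hb (i+1) (Nat.le_add_left 1 i) hi θs θ₀ θs hθs hθ₀ hθs
      have h3 := ha (i+1) hi θs θ₀ hθs hθ₀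
      have h4 := ih hi'
      have hKx : K (i+1) * ‖x (i+1) θs - x (i+1) θ₀‖ ≤
          K (i+1) * (‖θs - θ₀‖ * ∑ j ∈ Finset.range (i + 1),
            (∏ t ∈ Finset.Ico (j + 1) (i + 1), K t) * N j) :=
        mul_le_mul_of_nonneg_left h4 (hK _)
      calc ‖x (i + 2) θs - x (i + 2) θ₀‖
          ≤ K (i+1) * (‖θs - θ₀‖ * ∑ j ∈ Finset.range (i + 1),
              (∏ t ∈ Finset.Ico (j + 1) (i + 1), K t) * N j) + N (i+1) * ‖θs - θ₀‖ := by
            refine h1.trans (add_le_add (h2.trans hKx) h3)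
        _ = ‖θs - θ₀‖ * ∑ j ∈ Finset.range (i + 2),
              (∏ t ∈ Finset.Ico (j + 1) (i + 2), K t) * N j := by
            conv_rhs => rw [Finset.sum_range_succ]
            have hprod : ∀ j ∈ Finset.range (i + 1),
                (∏ t ∈ Finset.Ico (j + 1) (i + 2), K t) * N j =
                K (i+1) * ((∏ t ∈ Finset.Ico (j + 1) (i + 1), K t) * N j) := by
              intro j hj
              have hj' : j + 1 ≤ i + 1 := Nat.succ_le_of_lt (Finset.mem_range.mp hj)
              rw [Finset.prod_Ico_succ_top hj']
              ring
            conv_rhs => rw [Finset.sum_congr rfl hprod, ← Finset.mul_sum]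
            simp [Finset.Ico_self]
            ring
  -- telescope
  have htel : f (mix n θs θ₀) - f (mix 0 θs θ₀) =
      ∑ i ∈ Finset.range n, (f (mix (i + 1) θs θ₀) - f (mix i θs θ₀)) :=
    (Finset.sum_range_sub (fun i => f (mix i θs θ₀)) n).symm
  rw [htel]
  calc |∑ i ∈ Finset.range n, (f (mix (i + 1) θs θ₀) - f (mix i θs θ₀))|
      ≤ ∑ i ∈ Finset.range n, |f (mix (i + 1) θs θ₀) - f (mix i θs θ₀)| :=
        Finset.abs_sum_le_sum_abs _ _
    _ ≤ ∑ i ∈ Finset.range n, M i * (‖θs - θ₀‖ * ∑ j ∈ Finset.range (i + 1),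
          (∏ t ∈ Finset.Ico (j + 1) (i + 1), K t) * N j) := by
        refine Finset.sum_le_sum fun i hi => ?_
        have hi' := Finset.mem_range.mp hi
        exact (hc i hi' θs θ₀ hθs hθ₀).trans
          (mul_le_mul_of_nonneg_left (key i hi') (hM i))
    _ = ‖θs - θ₀‖ * ∑ i ∈ Finset.range n, M i * ∑ j ∈ Finset.range (i + 1),
          (∏ t ∈ Finset.Ico (j + 1) (i + 1), K t) * N j := by
        rw [Finset.mul_sum]; congr 1; ext i; ring
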